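/- For a fixed weak composition s, the relation T ≼ R defined by inv(T) ⊆ inv(R) (multiset inclusion of tree-inversion multisets) is a partial order on the set of s-decreasing trees. -/

import Mathlib

/-- Planar rooted trees: leaves are unlabeled; internal nodes carry a natural
number label and an ordered list of children. -/
inductive STree : Type where
  | leaf : STree
  | node : ℕ → List STree → STree

namespace STree

mutual
  /-- `x` occurs as the label of an internal node of the tree. -/
  def mem (x : ℕ) : STree → Bool
    | .leaf => false
    | .node a cs => x == a || memL x cs
  def memL (x : ℕ) : List STree → Bool
    | [] => false
    | t :: ts => mem x t || memL x ts
end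

mutual
  /-- The list of internal node labels, in preorder. -/
  def labels : STree → List ℕ
    | .leaf => []
    | .node a cs => a :: labelsL cs
  def labelsL : List STree → List ℕ
    | [] => []
    | t :: ts => labels t ++ labelsL ts
end

mutual
  /-- Local well-formedness for the signature `s` : an internal node labeled `a`
  has `s a + 1` children, and all labels below it are smaller than `a`. -/
  def wf (s : ℕ → ℕ) : STree → Prop
    | .leaf => True
    | .node a cs => cs.length = s a + 1 ∧ (∀ b ∈ labelsL cs, b < a) ∧ wfL s cs
  def wfL (s : ℕ → ℕ) : List STree → Prop
    | [] => True
    | t :: ts => wf s t ∧ wfL s ts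
end

/-- `T` is an `s`-decreasing tree: its internal nodes are labeled bijectively by
`1, …, n`, node `i` has `s i + 1` ordered children, and all descendants of a node
have smaller labels. -/
def IsSDecreasingTree (n : ℕ) (s : ℕ → ℕ) (T : STree) : Prop :=
  wf s T ∧ (labels T).Perm (List.range' 1 n)

/-- Index of the first tree of the list containing the label `x`. -/
def idxOf (x : ℕ) : List STree → ℕ
  | [] => 0
  | t :: ts => if mem x t then 0 else idxOf x ts + 1

mutual
  /-- The cardinality `card_T(y,x)` of the pair `(y,x)` in the tree:
  `0` if `x` is (weakly) left of `y`, `i` if `x` lies in the `i`-th child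
  subtree of `y`, and `s y` if `x` is right of `y`. -/
  def card (s : ℕ → ℕ) (y x : ℕ) : STree → ℕ
    | .leaf => 0
    | .node a cs => if a = y then idxOf x cs else cardL s y x cs
  def cardL (s : ℕ → ℕ) (y x : ℕ) : List STree → ℕ
    | [] => 0
    | t :: ts =>
      if mem y t then
        (if mem x t then card s y x t else if memL x ts then s y else 0)
      else (if mem x t then 0 else cardL s y x ts)
end

/-- The tree-inversion multiset of `T`, as a multiplicity function on pairs
`(y,x)` with `1 ≤ x < y ≤ n`. -/
def treeInv (n : ℕ) (s : ℕ → ℕ) (T : STree) : ℕ → ℕ → ℕ := fun y x =>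
  if 1 ≤ x ∧ x < y ∧ y ≤ n then card s y x T else 0

/-- A multi inversion set on `1, …, n` bounded by the weak composition `s`. -/
def IsMultiInvSet (n : ℕ) (s : ℕ → ℕ) (I : ℕ → ℕ → ℕ) : Prop :=
  (∀ y x, I y x ≤ s y) ∧ ∀ y x, ¬(1 ≤ x ∧ x < y ∧ y ≤ n) → I y x = 0

/-- Transitivity: for `a < b < c`, `card(c,b) = i` implies `card(b,a) = 0` or
`card(c,a) ≥ i`. -/
def InvTransitive (I : ℕ → ℕ → ℕ) : Prop :=
  ∀ a b c : ℕ, a < b → b < c → I b a = 0 ∨ I c b ≤ I c a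

/-- Planarity: for `a < b < c`, `card(c,a) = i` implies `card(b,a) = s b` or
`card(c,b) ≥ i`. -/
def InvPlanar (s : ℕ → ℕ) (I : ℕ → ℕ → ℕ) : Prop :=
  ∀ a b c : ℕ, a < b → b < c → I b a = s b ∨ I c a ≤ I c b

/-- An `s`-tree-inversion set: a bounded multi inversion set that is transitive
and planar. -/
def IsTreeInvSet (n : ℕ) (s : ℕ → ℕ) (I : ℕ → ℕ → ℕ) : Prop :=
  IsMultiInvSet n s I ∧ InvTransitive I ∧ InvPlanar s I

/-- Inclusion of multi inversion sets: pointwise comparison of multiplicities. -/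
def invLE (I J : ℕ → ℕ → ℕ) : Prop := ∀ y x, I y x ≤ J y x

/-- The `s`-weak order: inclusion of tree-inversion multisets. -/
def sWeakLE (n : ℕ) (s : ℕ → ℕ) (T R : STree) : Prop :=
  invLE (treeInv n s T) (treeInv n s R)

/-- Union of multi inversion sets: pointwise maximum. -/
def invUnion (I J : ℕ → ℕ → ℕ) : ℕ → ℕ → ℕ := fun y x => max (I y x) (J y x)

/-- Transitive closure: `tc I (c,a)` is the maximal value of `I (b₁, b₂)` over
all transitivity paths `c = b₁ > b₂ > … > b_k = a` (consecutive entries have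
positive multiplicity). -/
noncomputable def tc (I : ℕ → ℕ → ℕ) : ℕ → ℕ → ℕ := fun c a =>
  sSup {v | ∃ (b : ℕ) (l : List ℕ),
    List.Chain (fun u w => w < u ∧ 0 < I u w) c (b :: l) ∧
    (b :: l).getLast (List.cons_ne_nil b l) = a ∧ v = I c b}

/-- Adding the inversion `(c,a)`: increase its multiplicity by one. -/
def addInv (I : ℕ → ℕ → ℕ) (c a : ℕ) : ℕ → ℕ → ℕ := fun y x =>
  if y = c ∧ x = a then I y x + 1 else I y x

mutual
  /-- `a` is a (proper) descendant of the node labeled `c`. -/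
  def descIn (c a : ℕ) : STree → Bool
    | .leaf => false
    | .node b cs => (b == c && memL a cs) || descInL c a cs
  def descInL (c a : ℕ) : List STree → Bool
    | [] => false
    | t :: ts => descIn c a t || descInL c a ts
end

mutual
  /-- `a` belongs to the rightmost child subtree of the node labeled `c`. -/
  def inRight (c a : ℕ) : STree → Bool
    | .leaf => false
    | .node b cs =>
      (b == c && (match cs.getLast? with
        | some t => mem a t
        | none => false)) || inRightL c a cs
  def inRightL (c a : ℕ) : List STree → Bool
    | [] => false
    | t :: ts => inRight c a t || inRightL c a ts
end

mutual
  /-- `a` belongs to the leftmost child subtree of the node labeled `c`. -/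
  def inLeft (c a : ℕ) : STree → Bool
    | .leaf => false
    | .node b cs =>
      (b == c && (match cs.head? with
        | some t => mem a t
        | none => false)) || inLeftL c a cs
  def inLeftL (c a : ℕ) : List STree → Bool
    | [] => false
    | t :: ts => inLeft c a t || inLeftL c a ts
end

mutual
  /-- The rightmost child subtree of the node labeled `a` is empty (a leaf). -/
  def rightEmpty (a : ℕ) : STree → Bool
    | .leaf => false
    | .node b cs =>
      (b == a && (match cs.getLast? with
        | some .leaf => true
        | _ => false)) || rightEmptyL a cs
  def rightEmptyL (a : ℕ) : List STree → Bool
    | [] => false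
    | t :: ts => rightEmpty a t || rightEmptyL a ts
end

/-- `(a,c)` is a tree-ascent of `T`: `a` is a descendant of `c`, not in the
rightmost subtree of `c`; `a` lies in the rightmost subtree of any `b` with
`a < b < c` having `a` as a descendant; and if `s a > 0` the rightmost
(strict right) subtree of `a` is empty. -/
def IsTreeAscent (s : ℕ → ℕ) (T : STree) (a c : ℕ) : Prop :=
  a < c ∧ descIn c a T = true ∧ inRight c a T = false ∧
  (∀ b : ℕ, a < b → b < c → descIn b a T = true → inRight b a T = true) ∧
  (0 < s a → rightEmpty a T = true)

/-- `a` is the root label of the tree. -/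
def hasRoot (a : ℕ) : STree → Bool
  | .leaf => false
  | .node b _ => a == b

mutual
  /-- `a` is a direct child of the node `c`, but not its rightmost child. -/
  def nonRightChild (c a : ℕ) : STree → Bool
    | .leaf => false
    | .node b cs => (b == c && cs.dropLast.any (hasRoot a)) || nonRightChildL c a cs
  def nonRightChildL (c a : ℕ) : List STree → Bool
    | [] => false
    | t :: ts => nonRightChild c a t || nonRightChildL c a ts
end

/-- `(a,c)` is a Tamari-ascent of `T`: `a` is a non-right child of `c`. -/
def IsTamariAscent (T : STree) (a c : ℕ) : Prop :=
  a < c ∧ nonRightChild c a T = true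

mutual
  /-- Horizontal mirror image of a tree: the order of children is reversed at
  every internal node. -/
  def mirror : STree → STree
    | .leaf => .leaf
    | .node a cs => .node a (mirrorL cs)
  def mirrorL : List STree → List STree
    | [] => []
    | t :: ts => mirrorL ts ++ [mirror t]
end

/-- `T` is an `s`-Tamari tree: `card(c,a) ≤ card(c,b)` for all `a < b < c`. -/
def TamariProp (n : ℕ) (s : ℕ → ℕ) (T : STree) : Prop :=
  ∀ a b c : ℕ, a < b → b < c → treeInv n s T c a ≤ treeInv n s T c b

/-- `T` is an `s`-maximal-Tamari tree: `card(b,a) = s b` implies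
`card(c,a) = s c` for all `c > b`. -/
def MaxTamariProp (n : ℕ) (s : ℕ → ℕ) (T : STree) : Prop :=
  ∀ a b c : ℕ, 1 ≤ a → a < b → b < c → c ≤ n →
    treeInv n s T b a = s b → treeInv n s T c a = s c

/-- The projection `π↓` on inversion sets:
`card_Q(c,a) = min { card_T(c,b) : a ≤ b < c }`. -/
noncomputable def pidownInv (n : ℕ) (s : ℕ → ℕ) (T : STree) : ℕ → ℕ → ℕ :=
  fun c a => sInf {v | ∃ b : ℕ, a ≤ b ∧ b < c ∧ v = treeInv n s T c b}

open scoped Classical in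
/-- The projection `π↑` on inversion sets: `card_R(c,a) = s c` if there is
`a < b < c` with `card_T(b,a) = s b`, and `card_R(c,a) = card_T(c,a)` otherwise. -/
noncomputable def piupInv (n : ℕ) (s : ℕ → ℕ) (T : STree) : ℕ → ℕ → ℕ :=
  fun c a =>
    if 1 ≤ a ∧ a < c ∧ c ≤ n then
      if ∃ b : ℕ, a < b ∧ b < c ∧ treeInv n s T b a = s b then s c
      else treeInv n s T c a
    else 0

@[simp] lemma labels_leaf : labels .leaf = [] := rfl

@[simp] lemma labels_node (a : ℕ) (cs : List STree) :
    labels (.node a cs) = a :: labelsL cs := rfl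

@[simp] lemma labelsL_nil : labelsL [] = [] := rfl

@[simp] lemma labelsL_cons (t : STree) (ts : List STree) :
    labelsL (t :: ts) = labels t ++ labelsL ts := rfl

mutual
  theorem mem_iff : ∀ (x : ℕ) (T : STree), mem x T = true ↔ x ∈ labels T
    | x, .leaf => by simp [mem]
    | x, .node a cs => by simp [mem, memL_iff x cs]
  theorem memL_iff : ∀ (x : ℕ) (ts : List STree), memL x ts = true ↔ x ∈ labelsL ts
    | x, [] => by simp [memL]
    | x, t :: ts => by simp [memL, mem_iff x t, memL_iff x ts]
end

lemma idxOf_cons_eq_zero_iff {x : ℕ} {t : STree} {ts : List STree} :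
    idxOf x (t :: ts) = 0 ↔ x ∈ labels t := by
  by_cases hx : x ∈ labels t <;> simp [idxOf, mem_iff, hx]

lemma idxOf_cons_of_notMem {x : ℕ} {t : STree} (ts : List STree) (hx : x ∉ labels t) :
    idxOf x (t :: ts) = idxOf x ts + 1 := by
  simp [idxOf, mem_iff, hx]

section Card

variable {s : ℕ → ℕ} {y x : ℕ}

lemma card_node_self (cs : List STree) : card s y x (.node y cs) = idxOf x cs := by
  simp [card]

lemma card_node_of_ne {a : ℕ} (cs : List STree) (h : a ≠ y) :
    card s y x (.node a cs) = cardL s y x cs := by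
  simp [card, h]

lemma cardL_cons_of_mem {t : STree} (ts : List STree) (hy : y ∈ labels t)
    (hx : x ∈ labels t) : cardL s y x (t :: ts) = card s y x t := by
  simp [cardL, (mem_iff y t).mpr hy, (mem_iff x t).mpr hx]

lemma cardL_cons_of_notMem {t : STree} (ts : List STree) (hy : y ∉ labels t)
    (hx : x ∉ labels t) : cardL s y x (t :: ts) = cardL s y x ts := by
  simp [cardL, mem_iff, hy, hx]

end Card

section Injectivity

variable {s : ℕ → ℕ}

/- A tree is recovered from its labels and its cardinalities: the root is the largest label,
`card (root, x)` tells which child subtree contains `x`, and the cardinalities of pairs inside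
one child subtree are those of that subtree. -/
mutual
  theorem eq_of_card_eq : ∀ T R : STree, wf s T → wf s R → (labels T).Nodup →
      (labels T).Perm (labels R) →
      (∀ y x, x < y → y ∈ labels T → x ∈ labels T → card s y x T = card s y x R) → T = R
    | .leaf, .leaf, _, _, _, _, _ => rfl
    | .leaf, .node _ _, _, _, _, hperm, _ => by simp at hperm
    | .node _ _, .leaf, _, _, _, hperm, _ => by simp at hperm
    | .node a cs, .node a' ds, ⟨hlen, hlt, hwf⟩, ⟨hlen', hlt', hwf'⟩, hnd, hperm, hcard => by
      obtain rfl : a = a' := by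
        have ha' : a' ∈ a :: labelsL cs := hperm.mem_iff.mpr (by simp)
        have ha : a ∈ a' :: labelsL ds := hperm.mem_iff.mp (by simp)
        rcases List.mem_cons.mp ha' with h | h'
        · exact h.symm
        rcases List.mem_cons.mp ha with h | h
        · exact h
        · exact absurd (hlt' a h) (hlt a' h').not_gt
      congr
      refine eq_of_cardL_eq cs ds (hlen.trans hlen'.symm) hwf hwf' (List.nodup_cons.mp hnd).2
        (List.perm_cons a |>.mp hperm) (fun x hx => ?_) (fun y x hxy hy hx => ?_)
      · simpa [card_node_self] using hcard a x (hlt x hx) (by simp) (by simp [hx])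
      · have hya : a ≠ y := (hlt y hy).ne'
        simpa [card_node_of_ne _ hya] using hcard y x hxy (by simp [hy]) (by simp [hx])

  theorem eq_of_cardL_eq : ∀ cs ds : List STree, cs.length = ds.length → wfL s cs → wfL s ds →
      (labelsL cs).Nodup → (labelsL cs).Perm (labelsL ds) →
      (∀ x ∈ labelsL cs, idxOf x cs = idxOf x ds) →
      (∀ y x, x < y → y ∈ labelsL cs → x ∈ labelsL cs → cardL s y x cs = cardL s y x ds) →
      cs = ds
    | [], [], _, _, _, _, _, _, _ => rfl
    | t :: ts, d :: ds, hlen, ⟨hwft, hwfts⟩, ⟨hwfd, hwfds⟩, hnd, hperm, hidx, hcard => by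
      have hnd' := hperm.nodup_iff.mp hnd
      simp only [labelsL_cons, List.nodup_append'] at hnd hnd'
      obtain ⟨hndt, hndts, hdisj⟩ := hnd
      have head_mem : ∀ x, x ∈ labels t ↔ x ∈ labels d := by
        intro x
        by_cases hx : x ∈ labelsL (t :: ts)
        · rw [← idxOf_cons_eq_zero_iff (ts := ts), ← idxOf_cons_eq_zero_iff (ts := ds),
            hidx x hx]
        · have hx' : x ∉ labelsL (d :: ds) := hperm.mem_iff.not.mp hx
          simp only [labelsL_cons, List.mem_append, not_or] at hx hx'
          exact iff_of_false hx.1 hx'.1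
      obtain rfl : t = d := by
        refine eq_of_card_eq t d hwft hwfd hndt ?_ fun y x hxy hy hx => ?_
        · exact (List.perm_ext_iff_of_nodup hndt hnd'.1).mpr head_mem
        · rw [← cardL_cons_of_mem ts hy hx, hcard y x hxy (by simp [hy]) (by simp [hx]),
            cardL_cons_of_mem ds ((head_mem y).mp hy) ((head_mem x).mp hx)]
      have notMem_head : ∀ x ∈ labelsL ts, x ∉ labels t := fun x hx hxt => hdisj hxt hx
      congr
      refine eq_of_cardL_eq ts ds (by simpa using hlen) hwfts hwfds hndts
        ((List.perm_append_left_iff _).mp hperm) (fun x hx => ?_) (fun y x hxy hy hx => ?_)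
      · have := hidx x (by simp [hx])
        rwa [idxOf_cons_of_notMem _ (notMem_head x hx),
          idxOf_cons_of_notMem _ (notMem_head x hx), Nat.add_right_cancel_iff] at this
      · have := hcard y x hxy (by simp [hy]) (by simp [hx])
        rwa [cardL_cons_of_notMem _ (notMem_head y hy) (notMem_head x hx),
          cardL_cons_of_notMem _ (notMem_head y hy) (notMem_head x hx)] at this
end

variable {n : ℕ} {T R : STree}

theorem IsSDecreasingTree.eq_of_treeInv_eq (hT : IsSDecreasingTree n s T)
    (hR : IsSDecreasingTree n s R) (h : treeInv n s T = treeInv n s R) : T = R := by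
  refine eq_of_card_eq T R hT.1 hR.1 (hT.2.nodup_iff.mpr List.nodup_range')
    (hT.2.trans hR.2.symm) fun y x hxy hy hx => ?_
  have hy' := List.mem_range'_1.mp (hT.2.mem_iff.mp hy)
  have hx' := List.mem_range'_1.mp (hT.2.mem_iff.mp hx)
  have hrange : 1 ≤ x ∧ x < y ∧ y ≤ n := ⟨hx'.1, hxy, by omega⟩
  simpa [treeInv, hrange] using congrFun₂ h y x

end Injectivity

end STree

open STree in
/-- The `s`-weak order, i.e. inclusion of tree-inversion multisets, is a partial
order on the set of `s`-decreasing trees. -/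
theorem sWeak_isPartialOrder (n : ℕ) (s : ℕ → ℕ) :
    IsPartialOrder {T : STree // IsSDecreasingTree n s T}
      (fun T R => sWeakLE n s T.1 R.1) where
  refl _ _ _ := le_rfl
  trans _ _ _ hTR hRS y x := (hTR y x).trans (hRS y x)
  antisymm T R hTR hRT := Subtype.ext <| T.2.eq_of_treeInv_eq R.2 <|
    funext₂ fun y x => le_antisymm (hTR y x) (hRT y x)
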